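/- Let (X,Y) ∈ [0,1]^d × {-1,1} be a random couple with distribution P whose regression function η and marginal Π satisfy the low noise assumption with parameters B, γ > 0. Then there exists a constant D1 > 0 depending only on B and γ such that for every bounded measurable f : [0,1]^d → ℝ, R_P(f) − R* ≤ D1 · ‖(f − η)·1{sign f ≠ sign η}‖_∞^{1+γ}, where ‖·‖_∞ is the supremum norm on [0,1]^d. -/

import Mathlib

open MeasureTheory ProbabilityTheory Set

noncomputable section

namespace ActivePlugIn

variable {d : ℕ}

/-- The unit cube `[0,1]^d`. -/
def cube (d : ℕ) : Set (Fin d → ℝ) := Set.Icc 0 1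

/-- Sign function (with the convention `sgn 0 = -1`). -/
def sgn (t : ℝ) : ℝ := if 0 < t then 1 else -1

/-- Binary classification risk `R_P(f) = P(Y ≠ sign f(X))`. -/
def risk (P : Measure ((Fin d → ℝ) × ℝ)) (f : (Fin d → ℝ) → ℝ) : ℝ :=
  (P {p | p.2 ≠ sgn (f p.1)}).toReal

/-- Bayes risk: infimum of the risk over all measurable `g : [0,1]^d → [-1,1]`. -/
def bayesRisk (P : Measure ((Fin d → ℝ) × ℝ)) : ℝ :=
  ⨅ g : {g : (Fin d → ℝ) → ℝ // Measurable g ∧ ∀ x, g x ∈ Set.Icc (-1 : ℝ) 1},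
    risk P g.1

/-- `η` is (a version of) the regression function `E(Y | X = x)` of `P`. -/
def IsRegressionOf (η : (Fin d → ℝ) → ℝ) (P : Measure ((Fin d → ℝ) × ℝ)) : Prop :=
  ∀ s : Set (Fin d → ℝ), MeasurableSet s →
    ∫ p in Prod.fst ⁻¹' s, p.2 ∂P = ∫ x in s, η x ∂(P.map Prod.fst)

/-- `P` is a distribution of a random couple `(X,Y) ∈ [0,1]^d × {-1,1}` with
regression function `η`. -/
def GoodPair (d : ℕ) (P : Measure ((Fin d → ℝ) × ℝ)) (η : (Fin d → ℝ) → ℝ) : Prop :=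
  IsProbabilityMeasure P ∧ Measurable η ∧ (∀ x, η x ∈ Set.Icc (-1 : ℝ) 1) ∧
    (∀ᵐ p ∂P, p.1 ∈ cube d ∧ (p.2 = 1 ∨ p.2 = -1)) ∧ IsRegressionOf η P

/-- Tsybakov's low noise assumption with constants `B, γ`. -/
def LowNoise (B γ : ℝ) (μ : Measure (Fin d → ℝ)) (η : (Fin d → ℝ) → ℝ) : Prop :=
  ∀ t : ℝ, 0 < t → μ {x | |η x| ≤ t} ≤ ENNReal.ofReal (B * t ^ γ)

/-- Index of the level-`m` dyadic cube containing `x`. -/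
def cubeIdx (m : ℕ) (x : Fin d → ℝ) : Fin d → ℕ := fun i => ⌊x i * 2 ^ m⌋₊

/-- The (half-open) level-`m` dyadic cube with index `k`. -/
def dyadicCube (d m : ℕ) (k : Fin d → ℕ) : Set (Fin d → ℝ) :=
  {x | ∀ i, (k i : ℝ) / 2 ^ m ≤ x i ∧ x i < ((k i : ℝ) + 1) / 2 ^ m}

/-- Support of a measure: points all of whose open neighbourhoods have positive mass. -/
def suppSet (μ : Measure (Fin d → ℝ)) : Set (Fin d → ℝ) :=
  {x | ∀ U : Set (Fin d → ℝ), IsOpen U → x ∈ U → μ U ≠ 0}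

/-- `A` belongs to the sigma-algebra generated by level-`m` dyadic cubes,
i.e. it is a union of level-`m` dyadic cubes. -/
def IsDyadicUnion (d m : ℕ) (A : Set (Fin d → ℝ)) : Prop :=
  ∃ S : Set (Fin d → ℕ), A = ⋃ k ∈ S, dyadicCube d m k

/-- `(u1,u2)`-regularity of a measure with respect to the dyadic partitions. -/
def Regular (d : ℕ) (u1 u2 : ℝ) (μ : Measure (Fin d → ℝ)) : Prop :=
  ∀ m : ℕ, 1 ≤ m → ∀ k : Fin d → ℕ, (∀ i, k i < 2 ^ m) →
    (dyadicCube d m k ∩ suppSet μ).Nonempty →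
    ENNReal.ofReal (u1 / 2 ^ (d * m)) ≤ μ (dyadicCube d m k) ∧
      μ (dyadicCube d m k) ≤ ENNReal.ofReal (u2 / 2 ^ (d * m))

/-- The `L²(μ)`-projection `η̄_m` of `η` onto piecewise-constant functions over the
level-`m` dyadic partition: on each cube it is the `μ`-average of `η` over that cube. -/
def etaBar (μ : Measure (Fin d → ℝ)) (η : (Fin d → ℝ) → ℝ) (m : ℕ) (x : Fin d → ℝ) : ℝ :=
  ⨍ y in dyadicCube d m (cubeIdx m x), η y ∂μ

/-- `A` approximates the decision boundary at level `t`. -/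
def ApproxBoundary (μ : Measure (Fin d → ℝ)) (η : (Fin d → ℝ) → ℝ) (t : ℝ)
    (A : Set (Fin d → ℝ)) : Prop :=
  {x | |η x| ≤ t} ∩ suppSet μ ⊆ A ∩ suppSet μ ∧
    A ∩ suppSet μ ⊆ {x | |η x| ≤ 3 * t} ∩ suppSet μ

/-- Assumption 2 of the paper, with constant `B2`. -/
def Assumption2 (d : ℕ) (B2 : ℝ) (μ : Measure (Fin d → ℝ)) (η : (Fin d → ℝ) → ℝ) : Prop :=
  ∀ m : ℕ, 1 ≤ m → ∀ A : Set (Fin d → ℝ), IsDyadicUnion d m A →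
    (∃ t : ℝ, 0 < t ∧ ApproxBoundary μ η t A) → (A ∩ suppSet μ).Nonempty →
    B2 * (⨆ x ∈ A ∩ suppSet μ, |η x - etaBar μ η m x|) ^ 2 ≤
      ∫ x, (η x - etaBar μ η m x) ^ 2 ∂(μ[|A ∩ suppSet μ])

/-- The law of the label `Y ∈ {-1,1}` given `X = x`: `P(Y = 1|X = x) = (1 + η(x))/2`. -/
def labelKernel (d : ℕ) (η : (Fin d → ℝ) → ℝ) (x : Fin d → ℝ) : Measure ℝ :=
  ENNReal.ofReal ((1 + η x) / 2) • Measure.dirac 1 +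
    ENNReal.ofReal ((1 - η x) / 2) • Measure.dirac (-1)

/-- The joint law of `(X,Y)` when `X ∼ μ` and `P(Y = 1|X = x) = (1 + η(x))/2`. -/
def jointMeasure (d : ℕ) (μ : Measure (Fin d → ℝ)) (η : (Fin d → ℝ) → ℝ) :
    Measure ((Fin d → ℝ) × ℝ) :=
  μ.bind fun x => (labelKernel d η x).map fun y => (x, y)

/-- The law of the trajectory `(X_1,Y_1,…,X_N,Y_N)` of an active learning procedure:
`X_k` is sampled from the kernel `samp` applied to the past observations and `Y_k` is
sampled from the conditional label distribution determined by `η`. -/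
def traj (d : ℕ) (η : (Fin d → ℝ) → ℝ)
    (samp : (k : ℕ) → (Fin k → ((Fin d → ℝ) × ℝ)) → Measure (Fin d → ℝ)) :
    (N : ℕ) → Measure (Fin N → ((Fin d → ℝ) × ℝ))
  | 0 => Measure.dirac fun i => i.elim0
  | (N + 1) =>
      (traj d η samp N).bind fun h =>
        (samp N h).bind fun x => (labelKernel d η x).map fun y => Fin.snoc h (x, y)

/-- Kullback–Leibler divergence `KL(P,Q) = ∫ log (dP/dQ) dP`. -/
def kl {Ω : Type*} [MeasurableSpace Ω] (P Q : Measure Ω) : ℝ :=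
  ∫ ω, Real.log ((P.rnDeriv Q ω).toReal) ∂P

/-- Multivariate Taylor polynomial of degree `n` of `g` at `x`, evaluated at `x1`. -/
def taylorP (d : ℕ) (g : (Fin d → ℝ) → ℝ) (n : ℕ) (x x1 : Fin d → ℝ) : ℝ :=
  ∑ k ∈ Finset.range (n + 1),
    (1 / (Nat.factorial k : ℝ)) * iteratedFDeriv ℝ k g x (fun _ => x1 - x)

/-- The Hölder class `Σ(β,K,[0,1]^d)`. -/
def HolderSigma (d : ℕ) (β K : ℝ) (g : (Fin d → ℝ) → ℝ) : Prop :=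
  ContDiff ℝ (⌊β⌋₊ : ℕ) g ∧
    ∀ x ∈ cube d, ∀ x1 ∈ cube d, |g x1 - taylorP d g ⌊β⌋₊ x x1| ≤ K * ‖x - x1‖ ^ β

/-- The Hölder condition for exponent `0 < β ≤ 1` with constant `L`
(`‖·‖` on `Fin d → ℝ` is the sup-norm). -/
def HolderLow (d : ℕ) (β L : ℝ) (η : (Fin d → ℝ) → ℝ) : Prop :=
  ∀ x1 ∈ cube d, ∀ x2 ∈ cube d, |η x1 - η x2| ≤ L * ‖x1 - x2‖ ^ β

/-- The class `F_m` of piecewise-constant functions over the level-`m` dyadic partition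
with values bounded by `1`. -/
def Fclass (d m : ℕ) : Set ((Fin d → ℝ) → ℝ) :=
  {f | ∃ lam : (Fin d → ℕ) → ℝ, (∀ k, |lam k| ≤ 1) ∧ f = fun x => lam (cubeIdx m x)}

/-- Empirical quadratic risk `P_N (Y - f(X))²`. -/
def empRisk {d : ℕ} (N : ℕ) (ω : Fin N → ((Fin d → ℝ) × ℝ)) (f : (Fin d → ℝ) → ℝ) : ℝ :=
  (∑ j, ((ω j).2 - f (ω j).1) ^ 2) / N

/-- The set `J(N)` of admissible resolution levels. -/
def Jset (d N : ℕ) : Set ℕ :=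
  {m | 1 ≤ (2 : ℝ) ^ (d * m) ∧ (2 : ℝ) ^ (d * m) ≤ (N : ℝ) / (Real.log N) ^ 2}

/-- The penalized model-selection criterion with constant `K1`
(`s_m = m (s + log log₂ N)`). -/
def crit {d : ℕ} (K1 s : ℝ) (N : ℕ) (ω : Fin N → ((Fin d → ℝ) × ℝ)) (m : ℕ) : ℝ :=
  (⨅ f ∈ Fclass d m, empRisk N ω f) +
    K1 * ((2 : ℝ) ^ (d * m) + m * (s + Real.log (Real.logb 2 N))) / N

/-- `inf_{f ∈ F_m} E (f(X) - η(X))²`. -/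
def approxErr {d : ℕ} (μ : Measure (Fin d → ℝ)) (η : (Fin d → ℝ) → ℝ) (m : ℕ) : ℝ :=
  ⨅ f ∈ Fclass d m, ∫ x, (f x - η x) ^ 2 ∂μ

/-- `m̄ = min {m ≥ 1 : inf_{f ∈ F_m} E(f(X)-η(X))² ≤ K2 2^{dm}/N}`. -/
def mbar {d : ℕ} (K2 : ℝ) (N : ℕ) (μ : Measure (Fin d → ℝ)) (η : (Fin d → ℝ) → ℝ) : ℕ :=
  sInf {m | 1 ≤ m ∧ approxErr μ η m ≤ K2 * (2 : ℝ) ^ (d * m) / N}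

/-- Membership in the class `P*_U(β,γ)` (with Hölder smoothness stated for general `β`
via Taylor polynomials), for the pair (marginal `μ`, regression function `η`). -/
def InStarClass (d : ℕ) (β γ B K u1 u2 B2 : ℝ) (μ : Measure (Fin d → ℝ))
    (η : (Fin d → ℝ) → ℝ) : Prop :=
  IsProbabilityMeasure μ ∧ μ (cube d) = 1 ∧ Measurable η ∧
    (∀ x, η x ∈ Set.Icc (-1 : ℝ) 1) ∧ LowNoise B γ μ η ∧ HolderSigma d β K η ∧
    Regular d u1 u2 μ ∧ Assumption2 d B2 μ η

/-- Membership in the class `P*_U(β,γ)` for `0 < β ≤ 1`, with Hölder constant `B1`. -/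
def InStarClassLow (d : ℕ) (β γ B B1 u1 u2 B2 : ℝ) (μ : Measure (Fin d → ℝ))
    (η : (Fin d → ℝ) → ℝ) : Prop :=
  IsProbabilityMeasure μ ∧ μ (cube d) = 1 ∧ Measurable η ∧
    (∀ x, η x ∈ Set.Icc (-1 : ℝ) 1) ∧ LowNoise B γ μ η ∧ HolderLow d β B1 η ∧
    Regular d u1 u2 μ ∧ Assumption2 d B2 μ η

/-! The excess risk of `f` is `∫ |η|` over the disagreement set `{sgn f ≠ sgn η}` (the
Bayes classifier being `sgn η`). Off a `Π`-null set the disagreement set lies in the cube,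
and there `|η| ≤ |f - η| ≤ δ`, where `δ` is the supremum on the right-hand side. Hence the
excess risk is at most `δ · Π(|η| ≤ δ) ≤ B δ^(1+γ)`, i.e. `D1 = B` works. -/

lemma sgn_eq_one_or_eq_neg_one (t : ℝ) : sgn t = 1 ∨ sgn t = -1 := by
  unfold sgn; split <;> simp

lemma abs_sgn_le_one (t : ℝ) : |sgn t| ≤ 1 := by
  rcases sgn_eq_one_or_eq_neg_one t with h | h <;> simp [h]

lemma measurable_sgn : Measurable sgn :=
  Measurable.ite (measurableSet_lt measurable_const measurable_id)
    measurable_const measurable_const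

lemma measurableSet_sgn_ne {α : Type*} [MeasurableSpace α] {f g : α → ℝ}
    (hf : Measurable f) (hg : Measurable g) : MeasurableSet {x | sgn (f x) ≠ sgn (g x)} :=
  (measurableSet_eq_fun (measurable_sgn.comp hf) (measurable_sgn.comp hg)).compl

lemma mul_sgn_sub_mul_sgn_div_two (a b : ℝ) :
    (a * sgn a - a * sgn b) / 2 = if sgn b ≠ sgn a then |a| else 0 := by
  rcases lt_or_ge 0 a with ha | ha <;> rcases lt_or_ge 0 b with hb | hb <;>
    norm_num [sgn, ha, hb, not_lt.2, abs_of_pos, abs_of_nonpos]; ring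

lemma abs_le_abs_sub_of_sgn_ne {a b : ℝ} (h : sgn a ≠ sgn b) : |b| ≤ |a - b| := by
  unfold sgn at h
  split_ifs at h with ha hb hb
  · exact absurd rfl h
  · rw [abs_of_nonpos (not_lt.1 hb), abs_of_pos (by linarith)]
    linarith
  · rw [abs_of_pos hb, abs_of_nonpos (by linarith)]
    linarith
  · exact absurd rfl h

/-- For `Y, S ∈ {-1, 1}` one has `1{Y ≠ S} = (1 - Y S) / 2`. -/
lemma measureReal_ne_eq_of_pm_one {Ω : Type*} [MeasurableSpace Ω] {P : Measure Ω}
    [IsProbabilityMeasure P] {Y S : Ω → ℝ} (hY : Measurable Y) (hS : Measurable S)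
    (hY1 : ∀ᵐ ω ∂P, Y ω = 1 ∨ Y ω = -1) (hS1 : ∀ ω, S ω = 1 ∨ S ω = -1) :
    P.real {ω | Y ω ≠ S ω} = 1 / 2 - (∫ ω, Y ω * S ω ∂P) / 2 := by
  have hmeas : MeasurableSet {ω | Y ω ≠ S ω} := (measurableSet_eq_fun hY hS).compl
  have hYS : Integrable (fun ω => Y ω * S ω) P := by
    refine (integrable_const (1 : ℝ)).mono' (hY.mul hS).aestronglyMeasurable ?_
    filter_upwards [hY1] with ω hω
    rcases hω with h | h <;> rcases hS1 ω with h' | h' <;> simp [h, h']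
  calc P.real {ω | Y ω ≠ S ω}
      = ∫ ω, {ω | Y ω ≠ S ω}.indicator 1 ω ∂P := (integral_indicator_one hmeas).symm
    _ = ∫ ω, (1 / 2 - Y ω * S ω / 2) ∂P := by
        refine integral_congr_ae ?_
        filter_upwards [hY1] with ω hω
        rcases hω with h | h <;> rcases hS1 ω with h' | h' <;>
          simp [Set.indicator_apply, h, h'] <;> norm_num
    _ = 1 / 2 - (∫ ω, Y ω * S ω ∂P) / 2 := by
        rw [integral_sub (integrable_const _) (hYS.div_const 2), integral_const,
          probReal_univ, integral_div, one_smul]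

lemma integral_mul_sgn {α : Type*} [MeasurableSpace α] {μ : Measure α} {φ g : α → ℝ}
    (hφ : Integrable φ μ) (hg : Measurable g) :
    ∫ x, φ x * sgn (g x) ∂μ
      = ∫ x in {x | 0 < g x}, φ x ∂μ - ∫ x in {x | 0 < g x}ᶜ, φ x ∂μ := by
  have hs : MeasurableSet {x | 0 < g x} := measurableSet_lt measurable_const hg
  have hint : Integrable (fun x => φ x * sgn (g x)) μ :=
    hφ.mul_bdd (measurable_sgn.comp hg).aestronglyMeasurable
      (Filter.Eventually.of_forall fun x => abs_sgn_le_one _)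
  have hpos : ∫ x in {x | 0 < g x}, φ x * sgn (g x) ∂μ = ∫ x in {x | 0 < g x}, φ x ∂μ :=
    setIntegral_congr_fun hs fun x hx => by simp [sgn, show 0 < g x from hx]
  have hneg : ∫ x in {x | 0 < g x}ᶜ, φ x * sgn (g x) ∂μ = ∫ x in {x | 0 < g x}ᶜ, -φ x ∂μ :=
    setIntegral_congr_fun hs.compl fun x hx => by simp [sgn, show ¬0 < g x from hx]
  rw [← integral_add_compl hs hint, hpos, hneg, integral_neg, sub_eq_add_neg]

lemma IsRegressionOf.integral_snd_mul_sgn {P : Measure ((Fin d → ℝ) × ℝ)}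
    {η : (Fin d → ℝ) → ℝ} (hreg : IsRegressionOf η P) (hY : Integrable Prod.snd P)
    (hη : Integrable η (P.map Prod.fst)) {g : (Fin d → ℝ) → ℝ} (hg : Measurable g) :
    ∫ p, p.2 * sgn (g p.1) ∂P = ∫ x, η x * sgn (g x) ∂(P.map Prod.fst) := by
  have hs : MeasurableSet {x | 0 < g x} := measurableSet_lt measurable_const hg
  rw [integral_mul_sgn hη hg, ← hreg _ hs, ← hreg _ hs.compl]
  exact integral_mul_sgn hY (hg.comp measurable_fst : Measurable fun p : _ × ℝ => g p.1)

namespace GoodPair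

variable {P : Measure ((Fin d → ℝ) × ℝ)} {η : (Fin d → ℝ) → ℝ}

lemma integrable_regression (hP : GoodPair d P η) : Integrable η (P.map Prod.fst) := by
  have := hP.1
  exact (integrable_const (1 : ℝ)).mono' hP.2.1.aestronglyMeasurable
    (Filter.Eventually.of_forall fun x => abs_le.2 (hP.2.2.1 x))

lemma risk_eq (hP : GoodPair d P η) {g : (Fin d → ℝ) → ℝ} (hg : Measurable g) :
    risk P g = 1 / 2 - (∫ x, η x * sgn (g x) ∂(P.map Prod.fst)) / 2 := by
  have hη := hP.integrable_regression
  obtain ⟨hprob, -, -, hsupp, hreg⟩ := hP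
  have hY1 : ∀ᵐ p ∂P, p.2 = 1 ∨ p.2 = -1 := hsupp.mono fun p hp => hp.2
  have hY : Integrable Prod.snd P :=
    (integrable_const (1 : ℝ)).mono' measurable_snd.aestronglyMeasurable
      (hY1.mono fun p hp => by rcases hp with h | h <;> simp [h])
  have hS : Measurable fun p : (Fin d → ℝ) × ℝ => sgn (g p.1) :=
    measurable_sgn.comp (hg.comp measurable_fst)
  rw [risk, ← measureReal_def, measureReal_ne_eq_of_pm_one measurable_snd hS hY1
    fun p => sgn_eq_one_or_eq_neg_one _, hreg.integral_snd_mul_sgn hY hη hg]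

lemma ae_mem_cube (hP : GoodPair d P η) : ∀ᵐ x ∂(P.map Prod.fst), x ∈ cube d :=
  (ae_map_iff measurable_fst.aemeasurable measurableSet_Icc).2 (hP.2.2.2.1.mono fun _ hp => hp.1)

lemma risk_sub_risk_regression (hP : GoodPair d P η) {g : (Fin d → ℝ) → ℝ}
    (hg : Measurable g) :
    risk P g - risk P η = ∫ x in {x | sgn (g x) ≠ sgn (η x)}, |η x| ∂(P.map Prod.fst) := by
  have hη := hP.2.1
  have hmul_sgn {u : (Fin d → ℝ) → ℝ} (hu : Measurable u) :
      Integrable (fun x => η x * sgn (u x)) (P.map Prod.fst) :=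
    hP.integrable_regression.mul_bdd (measurable_sgn.comp hu).aestronglyMeasurable
      (Filter.Eventually.of_forall fun x => abs_sgn_le_one _)
  rw [hP.risk_eq hg, hP.risk_eq hη, ← integral_indicator (measurableSet_sgn_ne hg hη)]
  calc 1 / 2 - (∫ x, η x * sgn (g x) ∂(P.map Prod.fst)) / 2
        - (1 / 2 - (∫ x, η x * sgn (η x) ∂(P.map Prod.fst)) / 2)
      = ∫ x, (η x * sgn (η x) - η x * sgn (g x)) / 2 ∂(P.map Prod.fst) := by
        rw [integral_div, integral_sub (hmul_sgn hη) (hmul_sgn hg)]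
        ring
    _ = _ := by
        congr 1 with x
        rw [mul_sgn_sub_mul_sgn_div_two, Set.indicator_apply]
        rfl

lemma bayesRisk_eq (hP : GoodPair d P η) : bayesRisk P = risk P η := by
  let η' : {g : (Fin d → ℝ) → ℝ // Measurable g ∧ ∀ x, g x ∈ Set.Icc (-1 : ℝ) 1} :=
    ⟨η, hP.2.1, hP.2.2.1⟩
  have := Nonempty.intro η'
  refine le_antisymm (ciInf_le ⟨0, ?_⟩ η') (le_ciInf fun g => ?_)
  · rintro _ ⟨g, rfl⟩
    exact ENNReal.toReal_nonneg
  · have hexcess := hP.risk_sub_risk_regression g.2.1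
    have hnonneg : 0 ≤ ∫ x in {x | sgn (g.1 x) ≠ sgn (η x)}, |η x| ∂(P.map Prod.fst) :=
      setIntegral_nonneg_of_ae (Filter.Eventually.of_forall fun x => abs_nonneg _)
    linarith

end GoodPair

lemma setIntegral_abs_le_mul_measureReal {α : Type*} [MeasurableSpace α] {μ : Measure α}
    [IsFiniteMeasure μ] {η : α → ℝ} (hη : Measurable η) {E : Set α} (hE : MeasurableSet E)
    {δ : ℝ} (hδ : 0 ≤ δ) (hδE : ∀ᵐ x ∂μ, x ∈ E → |η x| ≤ δ) :
    ∫ x in E, |η x| ∂μ ≤ δ * μ.real {x | |η x| ≤ δ} := by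
  have hle : ∀ᵐ x ∂μ.restrict E, |η x| ≤ δ := (ae_restrict_iff' hE).2 hδE
  calc ∫ x in E, |η x| ∂μ ≤ ∫ _ in E, δ ∂μ :=
        integral_mono_ae ((integrable_const δ).mono' hη.abs.aestronglyMeasurable
          (by simpa using hle)) (integrable_const δ) hle
    _ = δ * μ.real E := by rw [setIntegral_const, smul_eq_mul, mul_comm]
    _ ≤ δ * μ.real {x | |η x| ≤ δ} :=
        mul_le_mul_of_nonneg_left (ENNReal.toReal_mono (measure_ne_top _ _)
          (measure_mono_ae (t := {x | |η x| ≤ δ}) hδE)) hδ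

lemma LowNoise.mul_measureReal_le {μ : Measure (Fin d → ℝ)} {η : (Fin d → ℝ) → ℝ} {B γ δ : ℝ}
    (h : LowNoise B γ μ η) (hB : 0 ≤ B) (hγ : 1 + γ ≠ 0) (hδ : 0 ≤ δ) :
    δ * μ.real {x | |η x| ≤ δ} ≤ B * δ ^ (1 + γ) := by
  rcases hδ.eq_or_lt with rfl | hδ
  · simp [Real.zero_rpow hγ]
  calc δ * μ.real {x | |η x| ≤ δ} ≤ δ * (B * δ ^ γ) := by
        gcongr
        exact ENNReal.toReal_le_of_le_ofReal (by positivity) (h δ hδ)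
    _ = B * δ ^ (1 + γ) := by rw [Real.rpow_add hδ, Real.rpow_one]; ring

lemma le_biSup_of_forall_le {α : Type*} {s : Set α} {e : α → ℝ} {C : ℝ} (hC : ∀ x, e x ≤ C)
    {x : α} (hx : x ∈ s) : e x ≤ ⨆ y ∈ s, e y :=
  le_ciSup₂ (f := fun y (_ : y ∈ s) => e y) ⟨C, by rintro _ ⟨-, ⟨y, rfl⟩, ⟨-, rfl⟩⟩; exact hC y⟩
    x hx

/-- comparison inequality, sup-norm version. -/
theorem statement0 (B γ : ℝ) (hB : 0 < B) (hγ : 0 < γ) :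
    ∃ D1 : ℝ, 0 < D1 ∧
      ∀ (d : ℕ) (P : Measure ((Fin d → ℝ) × ℝ)) (η : (Fin d → ℝ) → ℝ),
        GoodPair d P η →
        LowNoise B γ (P.map Prod.fst) η →
        ∀ f : (Fin d → ℝ) → ℝ, Measurable f → (∃ M : ℝ, ∀ x, |f x| ≤ M) →
          risk P f - bayesRisk P ≤
            D1 * (⨆ x ∈ cube d,
              if sgn (f x) ≠ sgn (η x) then |f x - η x| else 0) ^ (1 + γ) := by
  refine ⟨B, hB, fun d P η hP hLN f hf ⟨M, hM⟩ => ?_⟩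
  set e : (Fin d → ℝ) → ℝ := fun x => if sgn (f x) ≠ sgn (η x) then |f x - η x| else 0
  set δ := ⨆ x ∈ cube d, e x
  have he_nonneg (x) : 0 ≤ e x := by simp only [e]; split <;> positivity
  have he_le (x) : e x ≤ M + 1 := by
    simp only [e]
    split
    · exact (abs_sub _ _).trans (add_le_add (hM x) (abs_le.2 (hP.2.2.1 x)))
    · linarith [(abs_nonneg _).trans (hM x)]
  have hδ : 0 ≤ δ := Real.iSup_nonneg fun x => Real.iSup_nonneg fun _ => he_nonneg x
  have hdisagree : ∀ᵐ x ∂(P.map Prod.fst), x ∈ {x | sgn (f x) ≠ sgn (η x)} → |η x| ≤ δ := by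
    filter_upwards [hP.ae_mem_cube] with x hx hne
    have : e x = |f x - η x| := if_pos hne
    exact (abs_le_abs_sub_of_sgn_ne hne).trans (this ▸ le_biSup_of_forall_le he_le hx)
  have := hP.1
  calc risk P f - bayesRisk P
      = ∫ x in {x | sgn (f x) ≠ sgn (η x)}, |η x| ∂(P.map Prod.fst) := by
        rw [hP.bayesRisk_eq, hP.risk_sub_risk_regression hf]
    _ ≤ δ * (P.map Prod.fst).real {x | |η x| ≤ δ} :=
        setIntegral_abs_le_mul_measureReal hP.2.1 (measurableSet_sgn_ne hf hP.2.1) hδ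
          hdisagree
    _ ≤ B * δ ^ (1 + γ) := hLN.mul_measureReal_le hB.le (by linarith) hδ

end ActivePlugIn
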